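/- Let X be a compact Hausdorff space and let A ⊆ C(X) be a set with 0_X ∈ A and such that φ + c·1_X ∈ A whenever φ ∈ A and c ∈ ℝ. Let ν : A → ℝ satisfy ν(1_X) = 1, ν(φ + c·1_X) = ν(φ) + c for all φ ∈ A, c ∈ ℝ, and ν(φ) ≤ ν(ψ) whenever φ, ψ ∈ A with φ ≤ ψ pointwise. Let ψ ∈ C(X) \ A and a ∈ ℝ. Then there exists an extension of ν to a normed, weakly additive, order-preserving functional on all of C(X) taking the value a at ψ if and only if sup{ν(φ) : φ ∈ A, φ ≤ ψ} ≤ a ≤ inf{ν(φ) : φ ∈ A, φ ≥ ψ}. -/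

import Mathlib

/-- The set of normed, weakly additive, order-preserving functionals on `C(X, ℝ)`. -/
def OF (X : Type*) [TopologicalSpace X] : Set (C(X, ℝ) → ℝ) :=
  {ν | ν 1 = 1 ∧ (∀ (φ : C(X, ℝ)) (c : ℝ), ν (φ + ContinuousMap.const X c) = ν φ + c) ∧
    ∀ φ ψ : C(X, ℝ), φ ≤ ψ → ν φ ≤ ν ψ}

/-- For `φ ∈ C(X, ℝ)`, the evaluation map `π_φ : O(X) → ℝ`. -/
def piO (X : Type*) [TopologicalSpace X] (φ : C(X, ℝ)) : C(↥(OF X), ℝ) :=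
  ⟨fun ν => ν.1 φ, (continuous_apply φ).comp continuous_subtype_val⟩

/-- The monad multiplication `μ_O X : O(O(X)) → O(X)`, `μ_O X (M) (φ) = M (π_φ)`. -/
def muO (X : Type*) [TopologicalSpace X] (M : ↥(OF (↥(OF X)))) : ↥(OF X) := by
  refine ⟨fun φ => M.1 (piO X φ), ?_, ?_, ?_⟩
  · have h1 : piO X (1 : C(X, ℝ)) = 1 := by
      ext ν; exact ν.2.1
    show M.1 (piO X 1) = 1
    rw [h1]; exact M.2.1
  · intro φ c
    have h : piO X (φ + ContinuousMap.const X c)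
        = piO X φ + ContinuousMap.const _ c := by
      ext ν; exact ν.2.2.1 φ c
    show M.1 (piO X (φ + ContinuousMap.const X c)) = M.1 (piO X φ) + c
    rw [h]; exact M.2.2.1 _ c
  · intro φ ψ h
    exact M.2.2.2 _ _ (fun ν => ν.2.2.2 φ ψ h)

/-! Necessity of the bounds on `a` is monotonicity of the extension. Conversely, these bounds are
exactly what makes `ψ + c ↦ a + c` an order-preserving, weakly additive extension of `ν` to
`A ∪ {ψ + c | c ∈ ℝ}`. A functional of this kind on a domain stable under adding constants then
extends to all of `C(X)` by its lower envelope `χ ↦ sup {ν φ | φ ≤ χ}`, which is finite because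
`X` is compact and the constants lie in the domain. -/

open ContinuousMap

section Shifts

variable {X : Type*} [TopologicalSpace X]

theorem ContinuousMap.add_const_add_const (φ : C(X, ℝ)) (c d : ℝ) :
    φ + const X c + const X d = φ + const X (c + d) := by
  ext; simp [add_assoc]

theorem ContinuousMap.add_const_neg_add_const (φ : C(X, ℝ)) (c : ℝ) :
    φ + const X (-c) + const X c = φ := by
  rw [add_const_add_const, neg_add_cancel, const_zero, add_zero]

theorem ContinuousMap.add_const_neg_le_iff (φ χ : C(X, ℝ)) (c : ℝ) :
    φ + const X (-c) ≤ χ ↔ φ ≤ χ + const X c := by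
  rw [← add_le_add_iff_right (const X c), add_const_neg_add_const]

theorem ContinuousMap.le_add_const_neg_iff (φ χ : C(X, ℝ)) (c : ℝ) :
    χ ≤ φ + const X (-c) ↔ χ + const X c ≤ φ := by
  rw [← add_le_add_iff_right (const X c), add_const_neg_add_const]

theorem ContinuousMap.exists_const_le_and_le_const [CompactSpace X] (χ : C(X, ℝ)) :
    ∃ M : ℝ, const X (-M) ≤ χ ∧ χ ≤ const X M :=
  ⟨‖χ‖, fun x => neg_le_of_abs_le (χ.norm_coe_le_norm x),
    fun x => (le_abs_self _).trans (χ.norm_coe_le_norm x)⟩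

end Shifts

structure IsOrderPreservingFunctionalOn {X : Type*} [TopologicalSpace X] (A : Set C(X, ℝ))
    (ν : C(X, ℝ) → ℝ) : Prop where
  zero_mem : (0 : C(X, ℝ)) ∈ A
  add_const_mem : ∀ φ ∈ A, ∀ c : ℝ, φ + const X c ∈ A
  map_one : ν 1 = 1
  map_add_const : ∀ φ ∈ A, ∀ c : ℝ, ν (φ + const X c) = ν φ + c
  mono : ∀ φ ∈ A, ∀ ψ ∈ A, φ ≤ ψ → ν φ ≤ ν ψ

/-- The least order-preserving extension of `ν` from `A`. -/
noncomputable def lowerEnvelope {X : Type*} [TopologicalSpace X] (A : Set C(X, ℝ))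
    (ν : C(X, ℝ) → ℝ) (χ : C(X, ℝ)) : ℝ :=
  sSup (ν '' {φ ∈ A | φ ≤ χ})

/-- Extends `ν` by `ψ + c ↦ a + c`, reading off `c` as `ν ((ψ + c) - ψ) = ν (const c)`. -/
noncomputable def extendWithValue {X : Type*} [TopologicalSpace X] (A : Set C(X, ℝ))
    (ν : C(X, ℝ) → ℝ) (ψ : C(X, ℝ)) (a : ℝ) (χ : C(X, ℝ)) : ℝ :=
  open Classical in if χ ∈ A then ν χ else a + ν (χ - ψ)

theorem extendWithValue_of_mem {X : Type*} [TopologicalSpace X] {A : Set C(X, ℝ)}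
    {ν : C(X, ℝ) → ℝ} {ψ : C(X, ℝ)} {a : ℝ} {φ : C(X, ℝ)} (hφ : φ ∈ A) :
    extendWithValue A ν ψ a φ = ν φ :=
  if_pos hφ

namespace IsOrderPreservingFunctionalOn

variable {X : Type*} [TopologicalSpace X] {A : Set C(X, ℝ)} {ν : C(X, ℝ) → ℝ}
  (hν : IsOrderPreservingFunctionalOn A ν)
include hν

theorem const_mem (c : ℝ) : const X c ∈ A := by
  simpa using hν.add_const_mem 0 hν.zero_mem c

theorem one_mem : (1 : C(X, ℝ)) ∈ A := by
  simpa using hν.const_mem 1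

theorem map_const (c : ℝ) : ν (const X c) = c := by
  have h1 : ν (0 + const X 1) = ν 0 + 1 := hν.map_add_const 0 hν.zero_mem 1
  rw [zero_add, const_one, hν.map_one] at h1
  simpa [show ν 0 = 0 by linarith] using hν.map_add_const 0 hν.zero_mem c

/-- On the empty space `0 + 1 = 0`, which weak additivity forbids. -/
theorem nonempty : Nonempty X := by
  by_contra hX
  rw [not_nonempty_iff] at hX
  have h := hν.map_add_const 0 hν.zero_mem 1
  rw [Subsingleton.elim (0 + const X 1) 0] at h
  linarith

section Extension

variable {ψ : C(X, ℝ)} {a : ℝ}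

theorem map_le_of_le_add_const (hlo : ∀ φ ∈ A, φ ≤ ψ → ν φ ≤ a) {φ : C(X, ℝ)} (hφ : φ ∈ A)
    {c : ℝ} (hle : φ ≤ ψ + const X c) : ν φ ≤ a + c := by
  have h := hlo _ (hν.add_const_mem φ hφ (-c)) ((add_const_neg_le_iff φ ψ c).2 hle)
  rw [hν.map_add_const φ hφ] at h
  linarith

theorem le_map_of_add_const_le (hhi : ∀ φ ∈ A, ψ ≤ φ → a ≤ ν φ) {φ : C(X, ℝ)} (hφ : φ ∈ A)
    {c : ℝ} (hle : ψ + const X c ≤ φ) : a + c ≤ ν φ := by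
  have h := hhi _ (hν.add_const_mem φ hφ (-c)) ((le_add_const_neg_iff φ ψ c).2 hle)
  rw [hν.map_add_const φ hφ] at h
  linarith

variable (hlo : ∀ φ ∈ A, φ ≤ ψ → ν φ ≤ a) (hhi : ∀ φ ∈ A, ψ ≤ φ → a ≤ ν φ)
include hlo hhi

theorem extendWithValue_add_const (c : ℝ) : extendWithValue A ν ψ a (ψ + const X c) = a + c := by
  by_cases hc : ψ + const X c ∈ A
  · rw [extendWithValue_of_mem hc]
    exact le_antisymm (hν.map_le_of_le_add_const hlo hc le_rfl)
      (hν.le_map_of_add_const_le hhi hc le_rfl)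
  · rw [extendWithValue, if_neg hc, add_sub_cancel_left, hν.map_const]

theorem extend :
    IsOrderPreservingFunctionalOn (A ∪ Set.range (ψ + const X ·)) (extendWithValue A ν ψ a) where
  zero_mem := Or.inl hν.zero_mem
  add_const_mem := by
    rintro _ (hφ | ⟨c, rfl⟩) d
    exacts [Or.inl (hν.add_const_mem _ hφ d), Or.inr ⟨c + d, (add_const_add_const ψ c d).symm⟩]
  map_one := (extendWithValue_of_mem hν.one_mem).trans hν.map_one
  map_add_const := by
    rintro _ (hφ | ⟨c, rfl⟩) d
    · rw [extendWithValue_of_mem (hν.add_const_mem _ hφ d), extendWithValue_of_mem hφ,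
        hν.map_add_const _ hφ]
    · rw [add_const_add_const, hν.extendWithValue_add_const hlo hhi,
        hν.extendWithValue_add_const hlo hhi, add_assoc]
  mono := by
    rintro _ (hφ | ⟨c, rfl⟩) _ (hφ' | ⟨c', rfl⟩) hle
    · rw [extendWithValue_of_mem hφ, extendWithValue_of_mem hφ']
      exact hν.mono _ hφ _ hφ' hle
    · rw [extendWithValue_of_mem hφ, hν.extendWithValue_add_const hlo hhi]
      exact hν.map_le_of_le_add_const hlo hφ hle
    · rw [extendWithValue_of_mem hφ', hν.extendWithValue_add_const hlo hhi]
      exact hν.le_map_of_add_const_le hhi hφ' hle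
    · rw [hν.extendWithValue_add_const hlo hhi, hν.extendWithValue_add_const hlo hhi]
      obtain ⟨x⟩ := hν.nonempty
      exact add_le_add_right (by simpa using hle x) a

theorem extendWithValue_self : extendWithValue A ν ψ a ψ = a := by
  simpa using hν.extendWithValue_add_const hlo hhi 0

end Extension

theorem map_le_of_le_const {φ : C(X, ℝ)} (hφ : φ ∈ A) {M : ℝ} (hM : φ ≤ const X M) : ν φ ≤ M :=
  hν.map_const M ▸ hν.mono φ hφ _ (hν.const_mem M) hM

theorem le_map_of_const_le {φ : C(X, ℝ)} (hφ : φ ∈ A) {m : ℝ} (hm : const X m ≤ φ) : m ≤ ν φ :=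
  hν.map_const m ▸ hν.mono _ (hν.const_mem m) φ hφ hm

theorem lowerEnvelope_eq {φ : C(X, ℝ)} (hφ : φ ∈ A) : lowerEnvelope A ν φ = ν φ :=
  IsGreatest.csSup_eq ⟨⟨φ, ⟨hφ, le_rfl⟩, rfl⟩,
    Set.forall_mem_image.2 fun _ hχ => hν.mono _ hχ.1 φ hφ hχ.2⟩

theorem setOf_le_add_const (χ : C(X, ℝ)) (c : ℝ) :
    {φ ∈ A | φ ≤ χ + const X c} = (· + const X c) '' {φ ∈ A | φ ≤ χ} := by
  ext φ
  constructor
  · rintro ⟨hφ, hle⟩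
    exact ⟨φ + const X (-c), ⟨hν.add_const_mem φ hφ (-c), (add_const_neg_le_iff φ χ c).2 hle⟩,
      add_const_neg_add_const φ c⟩
  · rintro ⟨φ, ⟨hφ, hle⟩, rfl⟩
    exact ⟨hν.add_const_mem φ hφ c, add_le_add_left hle _⟩

variable [CompactSpace X]

theorem nonempty_setOf_le (χ : C(X, ℝ)) : {φ ∈ A | φ ≤ χ}.Nonempty :=
  let ⟨M, hM, _⟩ := χ.exists_const_le_and_le_const
  ⟨_, hν.const_mem (-M), hM⟩

theorem nonempty_setOf_ge (χ : C(X, ℝ)) : {φ ∈ A | χ ≤ φ}.Nonempty :=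
  let ⟨M, _, hM⟩ := χ.exists_const_le_and_le_const
  ⟨_, hν.const_mem M, hM⟩

theorem bddAbove_image_setOf_le (χ : C(X, ℝ)) : BddAbove (ν '' {φ ∈ A | φ ≤ χ}) := by
  obtain ⟨M, -, hM⟩ := χ.exists_const_le_and_le_const
  exact ⟨M, Set.forall_mem_image.2 fun φ hφ => hν.map_le_of_le_const hφ.1 (hφ.2.trans hM)⟩

theorem bddBelow_image_setOf_ge (χ : C(X, ℝ)) : BddBelow (ν '' {φ ∈ A | χ ≤ φ}) := by
  obtain ⟨M, hM, -⟩ := χ.exists_const_le_and_le_const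
  exact ⟨-M, Set.forall_mem_image.2 fun φ hφ => hν.le_map_of_const_le hφ.1 (hM.trans hφ.2)⟩

theorem lowerEnvelope_mono : Monotone (lowerEnvelope A ν) := fun χ χ' hle =>
  csSup_le_csSup (hν.bddAbove_image_setOf_le χ') ((hν.nonempty_setOf_le χ).image ν)
    (Set.image_mono fun _ hφ => ⟨hφ.1, hφ.2.trans hle⟩)

theorem lowerEnvelope_add_const (χ : C(X, ℝ)) (c : ℝ) :
    lowerEnvelope A ν (χ + const X c) = lowerEnvelope A ν χ + c := by
  have hshift :
      ν '' ((· + const X c) '' {φ ∈ A | φ ≤ χ}) = (· + c) '' (ν '' {φ ∈ A | φ ≤ χ}) := by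
    rw [Set.image_image, Set.image_image]
    exact Set.image_congr fun φ hφ => hν.map_add_const φ hφ.1 c
  rw [lowerEnvelope, lowerEnvelope, hν.setOf_le_add_const, hshift]
  exact ((OrderIso.addRight c).map_csSup' ((hν.nonempty_setOf_le χ).image ν)
    (hν.bddAbove_image_setOf_le χ)).symm

theorem lowerEnvelope_mem_OF : lowerEnvelope A ν ∈ OF X :=
  ⟨by rw [hν.lowerEnvelope_eq hν.one_mem, hν.map_one],
    hν.lowerEnvelope_add_const, fun _ _ h => hν.lowerEnvelope_mono h⟩

end IsOrderPreservingFunctionalOn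

theorem extend_orderPreserving_over_single_general (X : Type*) [TopologicalSpace X] [CompactSpace X]
    (A : Set C(X, ℝ)) (h0 : (0 : C(X, ℝ)) ∈ A)
    (hA : ∀ φ ∈ A, ∀ c : ℝ, φ + ContinuousMap.const X c ∈ A)
    (ν : C(X, ℝ) → ℝ) (hνn : ν 1 = 1)
    (hνa : ∀ φ ∈ A, ∀ c : ℝ, ν (φ + ContinuousMap.const X c) = ν φ + c)
    (hνo : ∀ φ ∈ A, ∀ ψ ∈ A, φ ≤ ψ → ν φ ≤ ν ψ)
    (ψ : C(X, ℝ)) (a : ℝ) :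
    (∃ ν' ∈ OF X, (∀ φ ∈ A, ν' φ = ν φ) ∧ ν' ψ = a) ↔
      sSup (ν '' {φ ∈ A | φ ≤ ψ}) ≤ a ∧ a ≤ sInf (ν '' {φ ∈ A | ψ ≤ φ}) := by
  have hν : IsOrderPreservingFunctionalOn A ν := ⟨h0, hA, hνn, hνa, hνo⟩
  rw [csSup_le_iff (hν.bddAbove_image_setOf_le ψ) ((hν.nonempty_setOf_le ψ).image ν),
    le_csInf_iff (hν.bddBelow_image_setOf_ge ψ) ((hν.nonempty_setOf_ge ψ).image ν),
    Set.forall_mem_image, Set.forall_mem_image]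
  constructor
  · rintro ⟨ν', ⟨-, -, hmono⟩, hext, rfl⟩
    exact ⟨fun φ hφ => hext φ hφ.1 ▸ hmono φ ψ hφ.2, fun φ hφ => hext φ hφ.1 ▸ hmono ψ φ hφ.2⟩
  · rintro ⟨hlo, hhi⟩
    have hlo' : ∀ φ ∈ A, φ ≤ ψ → ν φ ≤ a := fun φ hφ hle => hlo ⟨hφ, hle⟩
    have hhi' : ∀ φ ∈ A, ψ ≤ φ → a ≤ ν φ := fun φ hφ hle => hhi ⟨hφ, hle⟩
    have hext := hν.extend hlo' hhi'
    refine ⟨lowerEnvelope _ (extendWithValue A ν ψ a), hext.lowerEnvelope_mem_OF,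
      fun φ hφ => ?_, ?_⟩
    · rw [hext.lowerEnvelope_eq (Or.inl hφ), extendWithValue_of_mem hφ]
    · rw [hext.lowerEnvelope_eq (Or.inr ⟨0, by simp⟩), hν.extendWithValue_self hlo' hhi']

/-- Extension of an order-preserving functional over a single function: given a
normed, weakly additive, order-preserving functional `ν` defined on a subset `A ⊆ C(X)`
containing `0` and closed under adding constants, and `ψ ∉ A`, an extension of `ν` to all
of `C(X)` (normed, weakly additive, order-preserving) with value `a` at `ψ` exists iff
`sup{ν(φ) : φ ∈ A, φ ≤ ψ} ≤ a ≤ inf{ν(φ) : φ ∈ A, φ ≥ ψ}`. -/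
theorem extend_orderPreserving_over_single (X : Type*) [TopologicalSpace X] [CompactSpace X]
    [T2Space X] (A : Set C(X, ℝ)) (h0 : (0 : C(X, ℝ)) ∈ A)
    (hA : ∀ φ ∈ A, ∀ c : ℝ, φ + ContinuousMap.const X c ∈ A)
    (ν : C(X, ℝ) → ℝ) (hνn : ν 1 = 1)
    (hνa : ∀ φ ∈ A, ∀ c : ℝ, ν (φ + ContinuousMap.const X c) = ν φ + c)
    (hνo : ∀ φ ∈ A, ∀ ψ ∈ A, φ ≤ ψ → ν φ ≤ ν ψ)
    (ψ : C(X, ℝ)) (hψ : ψ ∉ A) (a : ℝ) :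
    (∃ ν' ∈ OF X, (∀ φ ∈ A, ν' φ = ν φ) ∧ ν' ψ = a) ↔
      sSup (ν '' {φ ∈ A | φ ≤ ψ}) ≤ a ∧ a ≤ sInf (ν '' {φ ∈ A | ψ ≤ φ}) :=
  extend_orderPreserving_over_single_general X A h0 hA ν hνn hνa hνo ψ a
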